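/- Let μ be a probability measure on ℝ supported on [0,∞) such that the maximum of n i.i.d. draws from μ is integrable, let n ≥ k ≥ 1 be integers, and let η_1 ≥ η_2 ≥ … ≥ η_k ≥ 0 be reals with η_{k+1} := 0. Setting u_i = E[v^{(1,⌈n/i⌉)}] for i ∈ [k], we have ∑_{i=1}^k i·(η_i − η_{i+1})·u_i ≥ (1 − 1/e)·∑_{i=1}^k η_i·E[v^{(i,n)}]. -/

import Mathlib

open MeasureTheory Filter
open scoped ENNReal

/-- The `j`-th largest value (1-indexed) among the `t` coordinates of `v`. -/
noncomputable def orderStat (t j : ℕ) (v : Fin t → ℝ) : ℝ :=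
  ((List.ofFn v).insertionSort (· ≤ ·)).getD (t - j) 0

/-- The expectation of the `j`-th largest of `t` i.i.d. draws from `μ`. -/
noncomputable def orderStatExp (μ : Measure ℝ) (j t : ℕ) : ℝ :=
  ∫ v, orderStat t j v ∂(Measure.pi fun _ : Fin t => μ)

lemma sorted_lt_getD_iff {l : List ℝ} (hl : l.Pairwise (· ≤ ·)) {j : ℕ} (hj1 : 1 ≤ j)
    (hjt : j ≤ l.length) (x : ℝ) :
    x < l.getD (l.length - j) 0 ↔ j ≤ (l.filter (fun y => x < y)).length := by
  set t := l.length with ht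
  have hidx : t - j < t := by omega
  rw [List.getD_eq_getElem l 0 hidx]
  constructor
  · intro hx
    have hdrop : (l.drop (t - j)).filter (fun y => decide (x < y)) = l.drop (t - j) := by
      rw [List.filter_eq_self]
      intro y hy
      obtain ⟨i, hi, rfl⟩ := List.mem_iff_getElem.mp hy
      rw [List.getElem_drop]
      simp only [decide_eq_true_eq]
      refine lt_of_lt_of_le hx ?_
      have := hl.rel_get_of_le (a := ⟨t - j, hidx⟩)
        (b := ⟨t - j + i, by simpa using (by rw [List.length_drop] at hi; omega : t - j + i < t)⟩)
        (by simp)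
      simpa using this
    have hsub : ((l.drop (t - j)).filter (fun y => decide (x < y))).length ≤
        (l.filter (fun y => decide (x < y))).length :=
      ((List.drop_sublist _ _).filter _).length_le
    rw [hdrop, List.length_drop] at hsub
    omega
  · intro hc
    by_contra hx
    push_neg at hx
    have htake : (l.take (t - j + 1)).filter (fun y => decide (x < y)) = [] := by
      rw [List.filter_eq_nil_iff]
      intro y hy
      obtain ⟨i, hi, rfl⟩ := List.mem_iff_getElem.mp hy
      rw [List.length_take] at hi
      rw [List.getElem_take]
      simp only [decide_eq_true_eq, not_lt]
      refine le_trans ?_ hx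
      have := hl.rel_get_of_le (a := ⟨i, by omega⟩) (b := ⟨t - j, hidx⟩)
        (by simp; omega)
      simpa using this
    have hsplit : l = l.take (t - j + 1) ++ l.drop (t - j + 1) := (List.take_append_drop _ _).symm
    rw [hsplit, List.filter_append, htake, List.nil_append] at hc
    have := ((l.drop (t - j + 1)).length_filter_le (fun y => decide (x < y)))
    rw [List.length_drop] at this
    omega

lemma lt_orderStat_iff {t j : ℕ} (hj1 : 1 ≤ j) (hjt : j ≤ t) (v : Fin t → ℝ) (x : ℝ) :
    x < orderStat t j v ↔ j ≤ (Finset.univ.filter (fun a => x < v a)).card := by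
  have hperm := List.perm_insertionSort (· ≤ ·) (List.ofFn v)
  have hlen : ((List.ofFn v).insertionSort (· ≤ ·)).length = t :=
    hperm.length_eq.trans (List.length_ofFn (f := v))
  unfold orderStat
  rw [show t - j = ((List.ofFn v).insertionSort (· ≤ ·)).length - j by rw [hlen]]
  rw [sorted_lt_getD_iff (List.pairwise_insertionSort _ _) hj1 (by omega) x]
  have h1 : (((List.ofFn v).insertionSort (· ≤ ·)).filter (fun y => x < y)).length
      = ((List.ofFn v).filter (fun y => x < y)).length := (hperm.filter _).length_eq
  rw [h1]
  have h2 : (List.ofFn v).filter (fun y => decide (x < y))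
      = ((List.finRange t).filter (fun a => decide (x < v a))).map v := by
    rw [List.ofFn_eq_map, List.filter_map]
    rfl
  have h3 : (Finset.univ.filter (fun a => x < v a)).card
      = ((List.finRange t).filter (fun a => decide (x < v a))).length := by
    rw [Fin.univ_def]
    rfl
  rw [h2, h3, List.length_map]

lemma measurable_N (t : ℕ) (x : ℝ) :
    Measurable (fun v : Fin t → ℝ => (Finset.univ.filter (fun a => x < v a)).card) := by
  simp only [Finset.card_filter]
  exact Finset.measurable_sum _ (fun a _ => Measurable.ite
    (measurableSet_lt measurable_const (measurable_pi_apply a)) measurable_const measurable_const)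

lemma measurableSet_N_ge (t j : ℕ) (x : ℝ) :
    MeasurableSet {v : Fin t → ℝ | j ≤ (Finset.univ.filter (fun a => x < v a)).card} :=
  measurableSet_le measurable_const (measurable_N t x)

lemma measurable_orderStat {t j : ℕ} (hj1 : 1 ≤ j) (hjt : j ≤ t) :
    Measurable (orderStat t j) := by
  apply measurable_of_Ioi
  intro x
  have : orderStat t j ⁻¹' Set.Ioi x
      = {v : Fin t → ℝ | j ≤ (Finset.univ.filter (fun a => x < v a)).card} := by
    ext v
    simp [Set.mem_preimage, Set.mem_Ioi, lt_orderStat_iff hj1 hjt]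
  rw [this]
  exact measurableSet_N_ge t j x

lemma pi_single_set (μ : Measure ℝ) [IsProbabilityMeasure μ] {t : ℕ} (a : Fin t)
    (s : Set ℝ) (hs : MeasurableSet s) :
    (Measure.pi fun _ : Fin t => μ) {v | v a ∈ s} = μ s := by
  have : {v : Fin t → ℝ | v a ∈ s} = Set.univ.pi (fun b => if b = a then s else Set.univ) := by
    ext v
    simp only [Set.mem_setOf_eq, Set.mem_pi, Set.mem_univ, forall_true_left]
    constructor
    · intro h b; by_cases hb : b = a <;> simp [hb, h]
    · intro h; have := h a; simpa using this
  rw [this, Measure.pi_pi]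
  rw [Finset.prod_eq_single a (fun b _ hb => by simp [hb]) (by simp)]
  simp

lemma ae_nonneg_coords (μ : Measure ℝ) [IsProbabilityMeasure μ] (hsupp : μ (Set.Iio 0) = 0)
    (t : ℕ) : ∀ᵐ v ∂(Measure.pi fun _ : Fin t => μ), ∀ a, 0 ≤ v a := by
  rw [ae_iff]
  have hsub : {v : Fin t → ℝ | ¬∀ (a : Fin t), 0 ≤ v a} ⊆ ⋃ a, {v | v a ∈ Set.Iio 0} := by
    intro v hv
    simp only [Set.mem_setOf_eq, not_forall, not_le] at hv
    obtain ⟨a, ha⟩ := hv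
    exact Set.mem_iUnion.mpr ⟨a, ha⟩
  refine measure_mono_null hsub (measure_iUnion_null fun a => ?_)
  rw [pi_single_set μ a _ measurableSet_Iio]
  exact hsupp

lemma orderStat_mem {t j : ℕ} (hj1 : 1 ≤ j) (hjt : j ≤ t) (v : Fin t → ℝ) :
    ∃ a, orderStat t j v = v a := by
  have hlen : ((List.ofFn v).insertionSort (· ≤ ·)).length = t :=
    (List.perm_insertionSort _ _).length_eq.trans (List.length_ofFn (f := v))
  have hidx : t - j < ((List.ofFn v).insertionSort (· ≤ ·)).length := by omega
  have hmem : orderStat t j v ∈ (List.ofFn v).insertionSort (· ≤ ·) := by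
    rw [orderStat, List.getD_eq_getElem _ 0 hidx]
    exact List.getElem_mem _
  rw [List.Perm.mem_iff (List.perm_insertionSort _ _), List.mem_ofFn] at hmem
  obtain ⟨a, ha⟩ := hmem
  exact ⟨a, ha.symm⟩

lemma ae_nonneg_orderStat (μ : Measure ℝ) [IsProbabilityMeasure μ] (hsupp : μ (Set.Iio 0) = 0)
    {t j : ℕ} (hj1 : 1 ≤ j) (hjt : j ≤ t) :
    0 ≤ᵐ[(Measure.pi fun _ : Fin t => μ)] orderStat t j := by
  filter_upwards [ae_nonneg_coords μ hsupp t] with v hv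
  obtain ⟨a, ha⟩ := orderStat_mem hj1 hjt v
  rw [Pi.zero_apply, ha]
  exact hv a

lemma sum_ite_Icc (t m : ℕ) (hm : m ≤ t) :
    ∑ j ∈ Finset.Icc 1 t, (if j ≤ m then (1 : ℝ≥0∞) else 0) = m := by
  rw [← Finset.sum_filter]
  have : (Finset.Icc 1 t).filter (fun j => j ≤ m) = Finset.Icc 1 m := by
    ext j; simp only [Finset.mem_Icc, Finset.mem_filter]; omega
  simp [this]

lemma sum_survival_eq (μ : Measure ℝ) [IsProbabilityMeasure μ] (t : ℕ) (x : ℝ) :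
    ∑ j ∈ Finset.Icc 1 t,
      (Measure.pi fun _ : Fin t => μ) {v | j ≤ (Finset.univ.filter (fun a => x < v a)).card}
      = t * μ (Set.Ioi x) := by
  set P := Measure.pi fun _ : Fin t => μ with hP
  have hNle : ∀ v : Fin t → ℝ, (Finset.univ.filter (fun a => x < v a)).card ≤ t := fun v =>
    (Finset.card_filter_le _ _).trans (by simp)
  calc ∑ j ∈ Finset.Icc 1 t, P {v | j ≤ (Finset.univ.filter (fun a => x < v a)).card}
      = ∑ j ∈ Finset.Icc 1 t, ∫⁻ v, (if j ≤ (Finset.univ.filter (fun a => x < v a)).card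
          then (1:ℝ≥0∞) else 0) ∂P := by
        refine Finset.sum_congr rfl fun j _ => ?_
        rw [← lintegral_indicator_one (measurableSet_N_ge t j x)]
        congr 1; ext v; simp [Set.indicator_apply]
    _ = ∫⁻ v, ∑ j ∈ Finset.Icc 1 t, (if j ≤ (Finset.univ.filter (fun a => x < v a)).card
          then (1:ℝ≥0∞) else 0) ∂P := by
        rw [lintegral_finset_sum]
        exact fun j _ => Measurable.ite
          ((measurableSet_N_ge t j x)) measurable_const measurable_const
    _ = ∫⁻ v, ((Finset.univ.filter (fun a => x < v a)).card : ℝ≥0∞) ∂P := by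
        congr 1; ext v
        exact sum_ite_Icc t _ (hNle v)
    _ = ∫⁻ v, ∑ a : Fin t, (if x < v a then (1:ℝ≥0∞) else 0) ∂P := by
        congr 1; ext v
        rw [Finset.card_filter]
        push_cast
        rfl
    _ = ∑ a : Fin t, ∫⁻ v, (if x < v a then (1:ℝ≥0∞) else 0) ∂P := by
        rw [lintegral_finset_sum]
        exact fun a _ => Measurable.ite
          (measurableSet_lt measurable_const (measurable_pi_apply a))
          measurable_const measurable_const
    _ = ∑ a : Fin t, μ (Set.Ioi x) := by
        refine Finset.sum_congr rfl fun a _ => ?_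
        rw [← pi_single_set μ a _ measurableSet_Ioi,
          ← lintegral_indicator_one (s := {v : Fin t → ℝ | v a ∈ Set.Ioi x})
          ((measurable_pi_apply a) measurableSet_Ioi)]
        refine lintegral_congr fun v => ?_
        simp [Set.indicator_apply]
    _ = t * μ (Set.Ioi x) := by simp [Finset.sum_const, mul_comm]

lemma survival_max_eq (μ : Measure ℝ) [IsProbabilityMeasure μ] (t : ℕ) (x : ℝ) :
    (Measure.pi fun _ : Fin t => μ)
      {v | 1 ≤ (Finset.univ.filter (fun a => x < v a)).card}
      = 1 - μ (Set.Iic x) ^ t := by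
  have hset : {v : Fin t → ℝ | 1 ≤ (Finset.univ.filter (fun a => x < v a)).card}
      = (Set.univ.pi fun _ : Fin t => Set.Iic x)ᶜ := by
    ext v
    simp only [Set.mem_setOf_eq, Set.mem_compl_iff, Set.mem_pi, Set.mem_univ, forall_true_left,
      Set.mem_Iic, Finset.one_le_card, Finset.filter_nonempty_iff, Finset.mem_univ, true_and]
    push_neg
    simp [exists_prop]
  rw [hset, prob_compl_eq_one_sub (MeasurableSet.univ_pi fun _ => measurableSet_Iic),
    Measure.pi_pi]
  simp

lemma orderStatExp_eq (μ : Measure ℝ) [IsProbabilityMeasure μ] (hsupp : μ (Set.Iio 0) = 0)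
    {t j : ℕ} (hj1 : 1 ≤ j) (hjt : j ≤ t) :
    orderStatExp μ j t = (∫⁻ x in Set.Ioi 0,
      (Measure.pi fun _ : Fin t => μ) {v | x < orderStat t j v}).toReal := by
  rw [orderStatExp,
    integral_eq_lintegral_of_nonneg_ae (ae_nonneg_orderStat μ hsupp hj1 hjt)
      (measurable_orderStat hj1 hjt).aestronglyMeasurable,
    lintegral_eq_lintegral_meas_lt _ (ae_nonneg_orderStat μ hsupp hj1 hjt)
      (measurable_orderStat hj1 hjt).aemeasurable]

lemma key_analytic {r : ℝ} (hr0 : 0 ≤ r) (hr1 : r ≤ 1) {m : ℕ} (hm : 1 ≤ m) :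
    (1 - 1/Real.exp 1) * min ((1 - r) * m) 1 ≤ 1 - r ^ m := by
  have hepos : (0:ℝ) < Real.exp 1 := Real.exp_pos 1
  have hexpneg : Real.exp (-1) = 1 / Real.exp 1 := by rw [Real.exp_neg]; ring
  have hmpos : (0:ℝ) < m := by exact_mod_cast hm
  by_cases h : 1 ≤ (1 - r) * m
  · rw [min_eq_right h]
    have hexp : r ≤ Real.exp (r - 1) := by
      have := Real.add_one_le_exp (r - 1); linarith
    have h1 : r ^ m ≤ Real.exp (r-1) ^ m := pow_le_pow_left₀ hr0 hexp m
    have h2 : Real.exp (r-1) ^ m = Real.exp (m * (r-1)) := (Real.exp_nat_mul _ m).symm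
    have h3 : Real.exp (m * (r-1)) ≤ Real.exp (-1) := Real.exp_le_exp.mpr (by nlinarith)
    rw [hexpneg] at h3
    nlinarith
  · push_neg at h
    rw [min_eq_left h.le]
    set q : ℝ := 1 - 1/m with hqdef
    have hq0 : 0 ≤ q := by
      have : (1:ℝ)/m ≤ 1 := by
        rw [div_le_one hmpos]; exact_mod_cast hm
      simp only [hqdef]; linarith
    have hqr : q ≤ r := by
      have : (1:ℝ) - r < 1/m := by
        rw [lt_div_iff₀ hmpos]; linarith
      simp only [hqdef]; linarith
    have hgeom : (∑ j ∈ Finset.range m, r ^ j) * (1 - r) = 1 - r ^ m := by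
      have := geom_sum_mul r m; nlinarith [this]
    have hgeomq : (∑ j ∈ Finset.range m, q ^ j) * (1 - q) = 1 - q ^ m := by
      have := geom_sum_mul q m; nlinarith [this]
    have hS : ∑ j ∈ Finset.range m, q ^ j ≤ ∑ j ∈ Finset.range m, r ^ j :=
      Finset.sum_le_sum fun j _ => pow_le_pow_left₀ hq0 hqr j
    have hqm : q ^ m ≤ 1/Real.exp 1 := by
      have hexpq : q ≤ Real.exp (-(1/m)) := by
        have := Real.add_one_le_exp (-(1/m)); simp only [hqdef]; linarith
      have h1 : q ^ m ≤ Real.exp (-(1/m)) ^ m := pow_le_pow_left₀ hq0 hexpq m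
      have h2 : Real.exp (-(1/m)) ^ m = Real.exp (m * (-(1/m))) := (Real.exp_nat_mul _ m).symm
      have h3 : (m:ℝ) * (-(1/m)) = -1 := by field_simp
      rw [h2, h3, hexpneg] at h1
      exact h1
    -- 1 - q = 1/m, so ∑ q^j = m * (1 - q^m) ≥ m * (1 - 1/e)
    have h1q : 1 - q = 1/m := by simp [hqdef]
    have hSq : (∑ j ∈ Finset.range m, q ^ j) = m * (1 - q ^ m) := by
      rw [← hgeomq, h1q]; field_simp
    have hr' : 0 ≤ 1 - r := by linarith
    have hSr : 0 ≤ ∑ j ∈ Finset.range m, q ^ j :=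
      Finset.sum_nonneg fun j _ => pow_nonneg hq0 j
    have hfin : (m:ℝ) * (1 - 1/Real.exp 1) * (1 - r) ≤ 1 - r ^ m := by
      rw [← hgeom]
      have step1 : (m:ℝ) * (1 - 1/Real.exp 1) ≤ ∑ j ∈ Finset.range m, q ^ j := by
        rw [hSq]
        have : 1 - 1/Real.exp 1 ≤ 1 - q ^ m := by linarith
        nlinarith
      nlinarith
    nlinarith

lemma telescope_Icc (f : ℕ → ℝ) : ∀ j k : ℕ, j ≤ k →
    ∑ i ∈ Finset.Icc j k, (f i - f (i+1)) = f j - f (k+1) := by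
  intro j k
  induction k with
  | zero => intro hj; interval_cases j; simp
  | succ k ih =>
    intro hj
    rcases Nat.lt_or_ge j (k+1) with h | h
    · rw [Finset.sum_Icc_succ_top hj, ih (by omega)]
      ring
    · have : j = k+1 := by omega
      subst this
      simp
lemma abel_Icc (H η : ℕ → ℝ) (k : ℕ) (hηlast : η (k + 1) = 0) :
    ∑ i ∈ Finset.Icc 1 k, η i * H i
      = ∑ i ∈ Finset.Icc 1 k, (η i - η (i+1)) * ∑ j ∈ Finset.Icc 1 i, H j := by
  symm
  have hfilter : ∀ i ∈ Finset.Icc 1 k, Finset.Icc 1 i = (Finset.Icc 1 k).filter (· ≤ i) := by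
    intro i hi
    simp only [Finset.mem_Icc] at hi
    ext j; simp only [Finset.mem_Icc, Finset.mem_filter]; omega
  calc ∑ i ∈ Finset.Icc 1 k, (η i - η (i+1)) * ∑ j ∈ Finset.Icc 1 i, H j
      = ∑ i ∈ Finset.Icc 1 k, ∑ j ∈ Finset.Icc 1 k,
          (if j ≤ i then (η i - η (i+1)) * H j else 0) := by
        refine Finset.sum_congr rfl fun i hi => ?_
        rw [hfilter i hi, Finset.mul_sum, Finset.sum_filter]
    _ = ∑ j ∈ Finset.Icc 1 k, ∑ i ∈ Finset.Icc 1 k,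
          (if j ≤ i then (η i - η (i+1)) * H j else 0) := Finset.sum_comm
    _ = ∑ j ∈ Finset.Icc 1 k, η j * H j := by
        refine Finset.sum_congr rfl fun j hj => ?_
        simp only [Finset.mem_Icc] at hj
        have : (Finset.Icc j k) = (Finset.Icc 1 k).filter (fun i => j ≤ i) := by
          ext i; simp only [Finset.mem_Icc, Finset.mem_filter]; omega
        rw [← Finset.sum_filter, ← this, ← Finset.sum_mul, telescope_Icc _ j k hj.2, hηlast]
        ring

lemma pointwise_ineq (μ : Measure ℝ) [IsProbabilityMeasure μ]
    (n k : ℕ) (hk : 1 ≤ k) (hkn : k ≤ n)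
    (η : ℕ → ℝ) (hη : ∀ i, 1 ≤ i → i ≤ k → η (i + 1) ≤ η i) (hηlast : η (k + 1) = 0)
    (x : ℝ) :
    (1 - 1 / Real.exp 1) * ∑ i ∈ Finset.Icc 1 k,
        η i * ((Measure.pi fun _ : Fin n => μ) {v | x < orderStat n i v}).toReal
      ≤ ∑ i ∈ Finset.Icc 1 k, (i : ℝ) * (η i - η (i + 1)) *
        ((Measure.pi fun _ : Fin ⌈(n : ℝ) / i⌉₊ => μ)
          {v | x < orderStat ⌈(n : ℝ) / i⌉₊ 1 v}).toReal := by
  have hn1 : 1 ≤ n := hk.trans hkn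
  set q : ℝ := (μ (Set.Iic x)).toReal with hqdef
  set p : ℝ := (μ (Set.Ioi x)).toReal with hpdef
  have hq0 : 0 ≤ q := ENNReal.toReal_nonneg
  have hp0 : 0 ≤ p := ENNReal.toReal_nonneg
  have hq1 : q ≤ 1 := by
    rw [hqdef]
    exact ENNReal.toReal_le_of_le_ofReal zero_le_one (by simpa using prob_le_one)
  have hqp : q + p = 1 := by
    have h : μ (Set.Iic x) + μ (Set.Ioi x) = 1 := by
      rw [← Set.compl_Iic]
      rw [measure_add_measure_compl (μ := μ) (s := Set.Iic x) measurableSet_Iic]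
      exact measure_univ
    rw [hqdef, hpdef, ← ENNReal.toReal_add (measure_ne_top μ _) (measure_ne_top μ _), h]
    simp
  have hefrac : 0 ≤ 1 - 1 / Real.exp 1 := by
    have h1 : (1:ℝ) ≤ Real.exp 1 := Real.one_le_exp zero_le_one
    have : 1 / Real.exp 1 ≤ 1 := by
      rw [div_le_one (Real.exp_pos 1)]; exact h1
    linarith
  -- ceiling facts
  have hm1 : ∀ i : ℕ, 1 ≤ i → 1 ≤ ⌈(n : ℝ) / i⌉₊ := by
    intro i hi
    rw [Nat.one_le_iff_ne_zero, ← Nat.pos_iff_ne_zero, Nat.ceil_pos]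
    positivity
  have hmn : ∀ i : ℕ, 1 ≤ i → (n:ℝ) ≤ (i : ℝ) * (⌈(n : ℝ) / i⌉₊ : ℝ) := by
    intro i hi
    have hipos : (0:ℝ) < i := by exact_mod_cast hi
    have := Nat.le_ceil ((n : ℝ) / i)
    calc (n:ℝ) = i * ((n:ℝ)/i) := by field_simp
    _ ≤ i * (⌈(n : ℝ) / i⌉₊ : ℝ) := by
        exact mul_le_mul_of_nonneg_left this hipos.le
  set H : ℕ → ℝ := fun j =>
    ((Measure.pi fun _ : Fin n => μ)
      {v | j ≤ (Finset.univ.filter (fun a => x < v a)).card}).toReal with hHdef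
  have hHnn : ∀ j, 0 ≤ H j := fun j => ENNReal.toReal_nonneg
  have hH1 : ∀ j, H j ≤ 1 := by
    intro j
    rw [hHdef]
    exact ENNReal.toReal_le_of_le_ofReal zero_le_one (by simpa using prob_le_one)
  -- partial sums bound
  have hT : ∀ i ∈ Finset.Icc 1 k, ∑ j ∈ Finset.Icc 1 i, H j ≤ min ((n:ℝ) * p) i := by
    intro i hi
    simp only [Finset.mem_Icc] at hi
    refine le_min ?_ ?_
    · have hsub : Finset.Icc 1 i ⊆ Finset.Icc 1 n := by
        intro j hj; simp only [Finset.mem_Icc] at *; omega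
      have h1 : ∑ j ∈ Finset.Icc 1 i,
          (Measure.pi fun _ : Fin n => μ) {v | j ≤ (Finset.univ.filter (fun a => x < v a)).card}
          ≤ (n : ℝ≥0∞) * μ (Set.Ioi x) := by
        rw [← sum_survival_eq μ n x]
        exact Finset.sum_le_sum_of_subset hsub
      have h2 : (∑ j ∈ Finset.Icc 1 i,
          (Measure.pi fun _ : Fin n => μ) {v | j ≤ (Finset.univ.filter (fun a => x < v a)).card}).toReal
          = ∑ j ∈ Finset.Icc 1 i, H j := by
        rw [ENNReal.toReal_sum]
        exact fun j _ => measure_ne_top _ _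
      rw [← h2]
      calc _ ≤ ((n : ℝ≥0∞) * μ (Set.Ioi x)).toReal :=
            ENNReal.toReal_mono (by finiteness) h1
        _ = (n:ℝ) * p := by rw [ENNReal.toReal_mul]; simp [hpdef]
    · calc ∑ j ∈ Finset.Icc 1 i, H j ≤ ∑ j ∈ Finset.Icc 1 i, 1 :=
          Finset.sum_le_sum fun j _ => hH1 j
      _ = (i:ℝ) := by simp
  -- survival of max formula
  have hG : ∀ i : ℕ, 1 ≤ i →
      ((Measure.pi fun _ : Fin ⌈(n : ℝ) / i⌉₊ => μ)
        {v | x < orderStat ⌈(n : ℝ) / i⌉₊ 1 v}).toReal = 1 - q ^ ⌈(n : ℝ) / i⌉₊ := by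
    intro i hi
    have hseteq : {v : Fin ⌈(n : ℝ) / i⌉₊ → ℝ | x < orderStat ⌈(n : ℝ) / i⌉₊ 1 v}
        = {v | 1 ≤ (Finset.univ.filter (fun a => x < v a)).card} := by
      ext v; exact lt_orderStat_iff le_rfl (hm1 i hi) v x
    rw [hseteq, survival_max_eq μ _ x]
    have hle : μ (Set.Iic x) ^ ⌈(n : ℝ) / i⌉₊ ≤ 1 := pow_le_one' prob_le_one _
    rw [ENNReal.toReal_sub_of_le hle ENNReal.one_ne_top, ENNReal.toReal_pow, ENNReal.toReal_one]
  -- identification of H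
  have hB : ∀ i : ℕ, 1 ≤ i → i ≤ k →
      ((Measure.pi fun _ : Fin n => μ) {v | x < orderStat n i v}).toReal = H i := by
    intro i h1 h2
    have hseteq : {v : Fin n → ℝ | x < orderStat n i v}
        = {v | i ≤ (Finset.univ.filter (fun a => x < v a)).card} := by
      ext v; exact lt_orderStat_iff h1 (h2.trans hkn) v x
    rw [hseteq]
  -- key per-index inequality
  have hkey : ∀ i ∈ Finset.Icc 1 k,
      (1 - 1/Real.exp 1) * min ((n:ℝ) * p) i ≤ (i:ℝ) * (1 - q ^ ⌈(n : ℝ) / i⌉₊) := by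
    intro i hi
    simp only [Finset.mem_Icc] at hi
    have hi1 := hi.1
    have hipos : (0:ℝ) ≤ i := by positivity
    have h1 := key_analytic hq0 hq1 (hm1 i hi1)
    have h1q : 1 - q = p := by linarith
    rw [h1q] at h1
    have h2 : (i:ℝ) * ((1 - 1/Real.exp 1) * min (p * ⌈(n : ℝ) / i⌉₊) 1)
        ≤ (i:ℝ) * (1 - q ^ ⌈(n : ℝ) / i⌉₊) := mul_le_mul_of_nonneg_left h1 hipos
    have h3 : (i:ℝ) * min (p * ⌈(n : ℝ) / i⌉₊) 1
        = min ((i:ℝ) * (p * ⌈(n : ℝ) / i⌉₊)) i := by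
      rw [mul_min_of_nonneg _ _ hipos, mul_one]
    have h4 : min ((n:ℝ) * p) i ≤ min ((i:ℝ) * (p * ⌈(n : ℝ) / i⌉₊)) i := by
      refine min_le_min ?_ le_rfl
      have := hmn i hi1
      nlinarith
    calc (1 - 1/Real.exp 1) * min ((n:ℝ) * p) i
        ≤ (1 - 1/Real.exp 1) * min ((i:ℝ) * (p * ⌈(n : ℝ) / i⌉₊)) i :=
          mul_le_mul_of_nonneg_left h4 hefrac
      _ = (i:ℝ) * ((1 - 1/Real.exp 1) * min (p * ⌈(n : ℝ) / i⌉₊) 1) := by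
          rw [← h3]; ring
      _ ≤ (i:ℝ) * (1 - q ^ ⌈(n : ℝ) / i⌉₊) := h2
  -- assemble
  calc (1 - 1 / Real.exp 1) * ∑ i ∈ Finset.Icc 1 k,
        η i * ((Measure.pi fun _ : Fin n => μ) {v | x < orderStat n i v}).toReal
      = (1 - 1 / Real.exp 1) * ∑ i ∈ Finset.Icc 1 k, η i * H i := by
        congr 1
        refine Finset.sum_congr rfl fun i hi => ?_
        simp only [Finset.mem_Icc] at hi
        rw [hB i hi.1 hi.2]
    _ = ∑ i ∈ Finset.Icc 1 k, (η i - η (i+1)) *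
          ((1 - 1 / Real.exp 1) * ∑ j ∈ Finset.Icc 1 i, H j) := by
        rw [abel_Icc H η k hηlast, Finset.mul_sum]
        refine Finset.sum_congr rfl fun i hi => ?_
        ring
    _ ≤ ∑ i ∈ Finset.Icc 1 k, (η i - η (i+1)) * ((i:ℝ) * (1 - q ^ ⌈(n : ℝ) / i⌉₊)) := by
        refine Finset.sum_le_sum fun i hi => ?_
        have hmem := hi
        simp only [Finset.mem_Icc] at hmem
        have hd : 0 ≤ η i - η (i+1) := by
          have := hη i hmem.1 hmem.2; linarith
        refine mul_le_mul_of_nonneg_left ?_ hd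
        calc (1 - 1 / Real.exp 1) * ∑ j ∈ Finset.Icc 1 i, H j
            ≤ (1 - 1 / Real.exp 1) * min ((n:ℝ) * p) i :=
              mul_le_mul_of_nonneg_left (hT i hi) hefrac
          _ ≤ (i:ℝ) * (1 - q ^ ⌈(n : ℝ) / i⌉₊) := hkey i hi
    _ = ∑ i ∈ Finset.Icc 1 k, (i : ℝ) * (η i - η (i + 1)) *
          ((Measure.pi fun _ : Fin ⌈(n : ℝ) / i⌉₊ => μ)
            {v | x < orderStat ⌈(n : ℝ) / i⌉₊ 1 v}).toReal := by
        refine Finset.sum_congr rfl fun i hi => ?_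
        simp only [Finset.mem_Icc] at hi
        rw [hG i hi.1]
        ring

theorem stmt9 (μ : Measure ℝ) [IsProbabilityMeasure μ]
    (hsupp : μ (Set.Iio 0) = 0)
    (n k : ℕ) (hk : 1 ≤ k) (hkn : k ≤ n)
    (hint : Integrable (orderStat n 1) (Measure.pi fun _ : Fin n => μ))
    (η : ℕ → ℝ) (hη : ∀ i, 1 ≤ i → i ≤ k → η (i + 1) ≤ η i) (hηlast : η (k + 1) = 0) :
    ∑ i ∈ Finset.Icc 1 k, (i : ℝ) * (η i - η (i + 1)) * orderStatExp μ 1 ⌈(n : ℝ) / i⌉₊ ≥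
      (1 - 1 / Real.exp 1) * ∑ i ∈ Finset.Icc 1 k, η i * orderStatExp μ i n := by
  have hn1 : 1 ≤ n := hk.trans hkn
  -- eta nonneg
  have hηnn : ∀ j, 1 ≤ j → j ≤ k + 1 → 0 ≤ η j := by
    have haux : ∀ d j, j + d = k + 1 → 1 ≤ j → 0 ≤ η j := by
      intro d
      induction d with
      | zero => intro j hj _; have : j = k + 1 := by omega
                rw [this, hηlast]
      | succ d ih =>
          intro j hj h1
          have h2 := ih (j+1) (by omega) (by omega)
          have h3 := hη j h1 (by omega)
          linarith
    intro j h1 h2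
    exact haux (k + 1 - j) j (by omega) h1
  -- ceiling facts
  have hm1 : ∀ i : ℕ, 1 ≤ i → 1 ≤ ⌈(n : ℝ) / i⌉₊ := by
    intro i hi
    rw [Nat.one_le_iff_ne_zero, ← Nat.pos_iff_ne_zero, Nat.ceil_pos]
    have : (0:ℝ) < i := by exact_mod_cast hi
    positivity
  have hmn : ∀ i : ℕ, 1 ≤ i → ⌈(n : ℝ) / i⌉₊ ≤ n := by
    intro i hi
    rw [Nat.ceil_le]
    exact div_le_self (by positivity) (by exact_mod_cast hi)
  -- survival functions
  set g : ℕ → ℝ → ℝ≥0∞ := fun i x =>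
    (Measure.pi fun _ : Fin ⌈(n : ℝ) / i⌉₊ => μ) {v | x < orderStat ⌈(n : ℝ) / i⌉₊ 1 v}
    with hgdef
  set b : ℕ → ℝ → ℝ≥0∞ := fun i x =>
    (Measure.pi fun _ : Fin n => μ) {v | x < orderStat n i v} with hbdef
  have hg_meas : ∀ i, Measurable (g i) := by
    intro i
    refine Antitone.measurable fun x y hxy => ?_
    exact measure_mono fun v hv => lt_of_le_of_lt hxy hv
  have hb_meas : ∀ i, Measurable (b i) := by
    intro i
    refine Antitone.measurable fun x y hxy => ?_
    exact measure_mono fun v hv => lt_of_le_of_lt hxy hv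
  -- finiteness
  have hfin1 : (∫⁻ x in Set.Ioi 0, b 1 x) < ⊤ := by
    have h0 := hint.lintegral_lt_top
    rwa [lintegral_eq_lintegral_meas_lt _ (ae_nonneg_orderStat μ hsupp le_rfl hn1)
      (measurable_orderStat le_rfl hn1).aemeasurable] at h0
  have hgb : ∀ i ∈ Finset.Icc 1 k, ∀ x : ℝ, g i x ≤ b 1 x := by
    intro i hi x
    simp only [Finset.mem_Icc] at hi
    have hseteq : ∀ (t : ℕ), 1 ≤ t → (Measure.pi fun _ : Fin t => μ)
        {v | x < orderStat t 1 v} = 1 - μ (Set.Iic x) ^ t := by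
      intro t ht
      rw [show {v : Fin t → ℝ | x < orderStat t 1 v}
          = {v | 1 ≤ (Finset.univ.filter (fun a => x < v a)).card} by
            ext v; exact lt_orderStat_iff le_rfl ht v x]
      exact survival_max_eq μ t x
    rw [hgdef, hbdef]
    simp only
    rw [hseteq _ (hm1 i hi.1), hseteq _ hn1]
    refine tsub_le_tsub_left ?_ 1
    calc μ (Set.Iic x) ^ n
        = μ (Set.Iic x) ^ ⌈(n : ℝ) / i⌉₊ * μ (Set.Iic x) ^ (n - ⌈(n : ℝ) / i⌉₊) := by
          rw [← pow_add]
          congr 1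
          have := hmn i hi.1
          omega
      _ ≤ μ (Set.Iic x) ^ ⌈(n : ℝ) / i⌉₊ * 1 :=
          mul_le_mul_right (pow_le_one' prob_le_one _) _
      _ = μ (Set.Iic x) ^ ⌈(n : ℝ) / i⌉₊ := mul_one _
  have hbb : ∀ i ∈ Finset.Icc 1 k, ∀ x : ℝ, b i x ≤ b 1 x := by
    intro i hi x
    simp only [Finset.mem_Icc] at hi
    refine measure_mono fun v hv => ?_
    simp only [Set.mem_setOf_eq] at *
    rw [lt_orderStat_iff le_rfl hn1]
    rw [lt_orderStat_iff hi.1 (hi.2.trans hkn)] at hv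
    omega
  have hA_fin : ∀ i ∈ Finset.Icc 1 k, (∫⁻ x in Set.Ioi 0, g i x) ≠ ⊤ := by
    intro i hi
    exact ((lintegral_mono (hgb i hi)).trans_lt hfin1).ne
  have hB_fin : ∀ i ∈ Finset.Icc 1 k, (∫⁻ x in Set.Ioi 0, b i x) ≠ ⊤ := by
    intro i hi
    exact ((lintegral_mono (hbb i hi)).trans_lt hfin1).ne
  -- coefficients
  have hefrac : 0 ≤ 1 - 1 / Real.exp 1 := by
    have h1 : (1:ℝ) ≤ Real.exp 1 := Real.one_le_exp zero_le_one
    have : 1 / Real.exp 1 ≤ 1 := by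
      rw [div_le_one (Real.exp_pos 1)]; exact h1
    linarith
  have hc_nn : ∀ i ∈ Finset.Icc 1 k, 0 ≤ (i:ℝ) * (η i - η (i+1)) := by
    intro i hi
    simp only [Finset.mem_Icc] at hi
    have := hη i hi.1 hi.2
    have : 0 ≤ η i - η (i+1) := by linarith
    positivity
  have hη_nn : ∀ i ∈ Finset.Icc 1 k, 0 ≤ η i := by
    intro i hi
    simp only [Finset.mem_Icc] at hi
    exact hηnn i hi.1 (by omega)
  -- pointwise ENNReal inequality
  have hpt : ∀ x : ℝ,
      ENNReal.ofReal (1 - 1 / Real.exp 1) * ∑ i ∈ Finset.Icc 1 k,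
        ENNReal.ofReal (η i) * b i x
      ≤ ∑ i ∈ Finset.Icc 1 k, ENNReal.ofReal ((i:ℝ) * (η i - η (i+1))) * g i x := by
    intro x
    have hreal := pointwise_ineq μ n k hk hkn η hη hηlast x
    have hL : ENNReal.ofReal ((1 - 1 / Real.exp 1) * ∑ i ∈ Finset.Icc 1 k,
        η i * (b i x).toReal)
        = ENNReal.ofReal (1 - 1 / Real.exp 1) * ∑ i ∈ Finset.Icc 1 k,
          ENNReal.ofReal (η i) * b i x := by
      rw [ENNReal.ofReal_mul hefrac,
        ENNReal.ofReal_sum_of_nonneg (fun i hi =>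
          mul_nonneg (hη_nn i hi) ENNReal.toReal_nonneg)]
      congr 1
      refine Finset.sum_congr rfl fun i hi => ?_
      rw [ENNReal.ofReal_mul (hη_nn i hi), ENNReal.ofReal_toReal (measure_ne_top _ _)]
    have hR : ENNReal.ofReal (∑ i ∈ Finset.Icc 1 k,
        (i : ℝ) * (η i - η (i + 1)) * (g i x).toReal)
        = ∑ i ∈ Finset.Icc 1 k, ENNReal.ofReal ((i:ℝ) * (η i - η (i+1))) * g i x := by
      rw [ENNReal.ofReal_sum_of_nonneg (fun i hi =>
        mul_nonneg (hc_nn i hi) ENNReal.toReal_nonneg)]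
      refine Finset.sum_congr rfl fun i hi => ?_
      rw [ENNReal.ofReal_mul (hc_nn i hi), ENNReal.ofReal_toReal (measure_ne_top _ _)]
    rw [← hL, ← hR]
    exact ENNReal.ofReal_le_ofReal hreal
  -- integrate
  have hint2 : ENNReal.ofReal (1 - 1 / Real.exp 1) * ∑ i ∈ Finset.Icc 1 k,
        ENNReal.ofReal (η i) * ∫⁻ x in Set.Ioi 0, b i x
      ≤ ∑ i ∈ Finset.Icc 1 k, ENNReal.ofReal ((i:ℝ) * (η i - η (i+1))) *
        ∫⁻ x in Set.Ioi 0, g i x := by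
    have hstep := lintegral_mono (μ := volume.restrict (Set.Ioi 0)) hpt
    calc ENNReal.ofReal (1 - 1 / Real.exp 1) * ∑ i ∈ Finset.Icc 1 k,
          ENNReal.ofReal (η i) * ∫⁻ x in Set.Ioi 0, b i x
        = ∫⁻ x in Set.Ioi 0, ENNReal.ofReal (1 - 1 / Real.exp 1) *
            ∑ i ∈ Finset.Icc 1 k, ENNReal.ofReal (η i) * b i x := by
          rw [lintegral_const_mul _ (Finset.measurable_sum _ fun i _ =>
            (hb_meas i).const_mul _)]
          congr 1
          rw [lintegral_finset_sum _ fun i _ => (hb_meas i).const_mul _]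
          refine Finset.sum_congr rfl fun i _ => ?_
          rw [lintegral_const_mul _ (hb_meas i)]
      _ ≤ ∫⁻ x in Set.Ioi 0, ∑ i ∈ Finset.Icc 1 k,
            ENNReal.ofReal ((i:ℝ) * (η i - η (i+1))) * g i x := hstep
      _ = ∑ i ∈ Finset.Icc 1 k, ENNReal.ofReal ((i:ℝ) * (η i - η (i+1))) *
            ∫⁻ x in Set.Ioi 0, g i x := by
          rw [lintegral_finset_sum _ fun i _ => (hg_meas i).const_mul _]
          refine Finset.sum_congr rfl fun i _ => ?_
          rw [lintegral_const_mul _ (hg_meas i)]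
  -- convert back to reals
  have hRHS_ne : (∑ i ∈ Finset.Icc 1 k, ENNReal.ofReal ((i:ℝ) * (η i - η (i+1))) *
      ∫⁻ x in Set.Ioi 0, g i x) ≠ ⊤ := by
    refine (ENNReal.sum_lt_top.mpr fun i hi => ?_).ne
    exact ENNReal.mul_lt_top ENNReal.ofReal_lt_top (hA_fin i hi).lt_top
  have hfinal := ENNReal.toReal_mono hRHS_ne hint2
  rw [ge_iff_le]
  calc (1 - 1 / Real.exp 1) * ∑ i ∈ Finset.Icc 1 k, η i * orderStatExp μ i n
      = (ENNReal.ofReal (1 - 1 / Real.exp 1) * ∑ i ∈ Finset.Icc 1 k,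
          ENNReal.ofReal (η i) * ∫⁻ x in Set.Ioi 0, b i x).toReal := by
        rw [ENNReal.toReal_mul, ENNReal.toReal_ofReal hefrac,
          ENNReal.toReal_sum (fun i hi =>
            ENNReal.mul_ne_top ENNReal.ofReal_ne_top (hB_fin i hi))]
        congr 1
        refine Finset.sum_congr rfl fun i hi => ?_
        simp only [Finset.mem_Icc] at hi
        rw [ENNReal.toReal_mul, ENNReal.toReal_ofReal (hη_nn i (by
          simp only [Finset.mem_Icc]; exact hi))]
        congr 1
        exact orderStatExp_eq μ hsupp hi.1 (hi.2.trans hkn)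
    _ ≤ (∑ i ∈ Finset.Icc 1 k, ENNReal.ofReal ((i:ℝ) * (η i - η (i+1))) *
          ∫⁻ x in Set.Ioi 0, g i x).toReal := hfinal
    _ = ∑ i ∈ Finset.Icc 1 k, (i : ℝ) * (η i - η (i + 1)) *
          orderStatExp μ 1 ⌈(n : ℝ) / i⌉₊ := by
        rw [ENNReal.toReal_sum (fun i hi =>
          ENNReal.mul_ne_top ENNReal.ofReal_ne_top (hA_fin i hi))]
        refine Finset.sum_congr rfl fun i hi => ?_
        simp only [Finset.mem_Icc] at hi
        rw [ENNReal.toReal_mul, ENNReal.toReal_ofReal (hc_nn i (by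
          simp only [Finset.mem_Icc]; exact hi))]
        congr 1
        exact (orderStatExp_eq μ hsupp le_rfl (hm1 i hi.1)).symm
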